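/- arXiv:1608.08039 — 3 statements merged into one kernel-verified Lean document; each statement's English description precedes it below -/
import Mathlib

section
/- Let F, A ∈ ℝ^{m×n}, H ∈ ℝ^{p×n}, and let I = [0, t₁]. Suppose (x, f, y, η) is a solution of the DAE d(Fx)/dt = Ax + f, y = Hx + η on I, and (q, u) is a solution of the dual DAE d(Fᵀq)/dt = Aᵀq − Hᵀu on I with Fᵀq(t₁) absolutely continuous. Define w(s) = q(t₁ − s). Then ℓᵀFx(t₁) − ∫₀^{t₁} yᵀ(t)U(t)dt = (Fx(0))ᵀ(F⁺)ᵀFᵀw(0) + ∫₀^{t₁} (wᵀ(t)f(t) − Uᵀ(t)η(t) + bᵀ(t)x(t)) dt, where U(s) = u(t₁−s), Fᵀw(t₁) = Fᵀℓ, and b(t) = d(Fᵀw)(t)/dt + Aᵀw(t) − HᵀU(t). -/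
open Matrix MeasureTheory

/-- `Fp` is the Moore–Penrose pseudoinverse of `F`. -/
def IsMoorePenrose {m n : ℕ} (F : Matrix (Fin m) (Fin n) ℝ)
    (Fp : Matrix (Fin n) (Fin m) ℝ) : Prop :=
  F * Fp * F = F ∧ Fp * F * Fp = Fp ∧ (F * Fp)ᵀ = F * Fp ∧ (Fp * F)ᵀ = Fp * F

/-!
Put `X := F⁺Fx` and `P := Fᵀw`. Both are absolutely continuous, with derivatives `F⁺(Ax + f)` and
`Dw`, so integration by parts gives `∫₀^{t₁} (Dwᵀ X + Pᵀ F⁺(Ax + f)) = P(t₁)ᵀX(t₁) - P(0)ᵀX(0)`.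
The derivative of an absolutely continuous function with values in a subspace stays in that
subspace, so a.e. `Ax + f ∈ range F` and `Dw ∈ range Fᵀ`. Since `FF⁺` fixes `range F` and
`FᵀF⁺ᵀ` fixes `range Fᵀ`, the integrand equals `wᵀ(Ax + f) + Dwᵀx`, which by the output equation
`y = Hx + η` and the definition of `b` is `wᵀf - Uᵀη + bᵀx + yᵀU`. At the endpoints,
`Fᵀw(t₁) = Fᵀℓ` and `FF⁺F = F` turn `P(t₁)ᵀX(t₁)` into `ℓᵀFx(t₁)`.
-/

open Set Filter
open scoped Interval

section Primitive

variable {a b : ℝ}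

theorem IntervalIntegrable.ae_mem_of_forall_integral_mem {E : Type*} [NormedAddCommGroup E]
    [NormedSpace ℝ E] [CompleteSpace E] {g : ℝ → E} {K : Submodule ℝ E}
    (hK : IsClosed (K : Set E)) (hg : IntervalIntegrable g volume a b)
    (h : ∀ t ∈ [[a, b]], ∫ s in a..t, g s ∈ K) :
    ∀ᵐ t, t ∈ Ι a b → g t ∈ K := by
  have hne (c : ℝ) : ∀ᵐ t, t ≠ c := by simp [ae_iff, measure_singleton]
  filter_upwards [hg.ae_hasDerivAt_integral, hne a, hne b] with t hderiv hta htb ht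
  have ht' : t ∈ Ioo (min a b) (max a b) := by
    refine ⟨ht.1, lt_of_le_of_ne ht.2 ?_⟩
    rcases max_choice a b with h | h <;> rw [h] <;> assumption
  refine hK.mem_of_tendsto (hderiv (uIoc_subset_uIcc ht) a left_mem_uIcc).tendsto_slope ?_
  filter_upwards [nhdsWithin_le_nhds (Icc_mem_nhds ht'.1 ht'.2)] with s hs
  exact K.smul_mem _ (K.sub_mem (h s hs) (h t (Ioo_subset_Icc_self ht')))

theorem IntervalIntegrable.absolutelyContinuousOnInterval_const_add_integral {g : ℝ → ℝ}
    (hg : IntervalIntegrable g volume a b) (c : ℝ) :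
    AbsolutelyContinuousOnInterval (fun t => c + ∫ s in a..t, g s) a b :=
  (LipschitzWith.const c).lipschitzOnWith.absolutelyContinuousOnInterval.add
    (hg.absolutelyContinuousOnInterval_intervalIntegral left_mem_uIcc)

theorem IntervalIntegrable.ae_deriv_const_add_integral {g : ℝ → ℝ}
    (hg : IntervalIntegrable g volume a b) (c : ℝ) :
    ∀ᵐ t, t ∈ Ι a b → deriv (fun t => c + ∫ s in a..t, g s) t = g t := by
  filter_upwards [hg.ae_hasDerivAt_integral] with t ht hmem
  exact ((ht (uIoc_subset_uIcc hmem) a left_mem_uIcc).const_add c).deriv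

theorem continuousOn_of_forall_eq_add_integral {p dp : ℝ → ℝ}
    (hdp : IntervalIntegrable dp volume a b)
    (hp : ∀ t ∈ [[a, b]], p t = p a + ∫ s in a..t, dp s) : ContinuousOn p [[a, b]] :=
  (hdp.absolutelyContinuousOnInterval_const_add_integral (p a)).continuousOn.congr hp

theorem integral_deriv_mul_eq_sub_of_eq_add_integral {p x dp dx : ℝ → ℝ}
    (hdp : IntervalIntegrable dp volume a b) (hdx : IntervalIntegrable dx volume a b)
    (hp : ∀ t ∈ [[a, b]], p t = p a + ∫ s in a..t, dp s)
    (hx : ∀ t ∈ [[a, b]], x t = x a + ∫ s in a..t, dx s) :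
    ∫ t in a..b, (dp t * x t + p t * dx t) = p b * x b - p a * x a := by
  have key := AbsolutelyContinuousOnInterval.integral_deriv_mul_eq_sub
    (hdp.absolutelyContinuousOnInterval_const_add_integral (p a))
    (hdx.absolutelyContinuousOnInterval_const_add_integral (x a))
  rw [← hp b right_mem_uIcc, ← hx b right_mem_uIcc] at key
  simp only [intervalIntegral.integral_same, add_zero] at key
  rw [← key]
  refine intervalIntegral.integral_congr_ae ?_
  filter_upwards [hdp.ae_deriv_const_add_integral (p a), hdx.ae_deriv_const_add_integral (x a)]
    with t hpt hxt ht
  rw [hpt ht, hxt ht, ← hp t (uIoc_subset_uIcc ht), ← hx t (uIoc_subset_uIcc ht)]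

end Primitive

section FiniteDimensional

variable {ι κ : Type*} [Fintype ι] [Fintype κ] {a b : ℝ}

theorem IntervalIntegrable.eval {φ : ℝ → ι → ℝ} (h : IntervalIntegrable φ volume a b) (i : ι) :
    IntervalIntegrable (φ · i) volume a b :=
  ⟨h.1.eval i, h.2.eval i⟩

theorem intervalIntegral.integral_eval {φ : ℝ → ι → ℝ} (h : IntervalIntegrable φ volume a b)
    (i : ι) : (∫ t in a..b, φ t) i = ∫ t in a..b, φ t i :=
  ((ContinuousLinearMap.proj (R := ℝ) (φ := fun _ : ι => ℝ) i).intervalIntegral_comp_comm h).symm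

theorem IntervalIntegrable.mulVec (M : Matrix κ ι ℝ) {φ : ℝ → ι → ℝ}
    (h : IntervalIntegrable φ volume a b) :
    IntervalIntegrable (fun t => M *ᵥ φ t) volume a b :=
  ⟨(LinearMap.toContinuousLinearMap M.mulVecLin).integrable_comp h.1,
    (LinearMap.toContinuousLinearMap M.mulVecLin).integrable_comp h.2⟩

theorem Matrix.mulVec_intervalIntegral (M : Matrix κ ι ℝ) {φ : ℝ → ι → ℝ}
    (h : IntervalIntegrable φ volume a b) :
    M *ᵥ ∫ t in a..b, φ t = ∫ t in a..b, M *ᵥ φ t :=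
  ((LinearMap.toContinuousLinearMap M.mulVecLin).intervalIntegral_comp_comm h).symm

theorem IntervalIntegrable.mono_set_of_mem_uIcc {E : Type*} [NormedAddCommGroup E] {φ : ℝ → E}
    (h : IntervalIntegrable φ volume a b) {t : ℝ} (ht : t ∈ [[a, b]]) :
    IntervalIntegrable φ volume a t :=
  h.mono_set (uIcc_subset_uIcc left_mem_uIcc ht)

theorem eval_eq_add_integral_eval {P DP : ℝ → ι → ℝ} (hDP : IntervalIntegrable DP volume a b)
    (hP : ∀ t ∈ [[a, b]], P t = P a + ∫ s in a..t, DP s) (i : ι) :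
    ∀ t ∈ [[a, b]], P t i = P a i + ∫ s in a..t, DP s i := fun t ht => by
  rw [hP t ht, Pi.add_apply, intervalIntegral.integral_eval (hDP.mono_set_of_mem_uIcc ht)]

theorem integral_deriv_dotProduct_eq_sub_of_eq_add_integral {P X DP DX : ℝ → ι → ℝ}
    (hDP : IntervalIntegrable DP volume a b) (hDX : IntervalIntegrable DX volume a b)
    (hP : ∀ t ∈ [[a, b]], P t = P a + ∫ s in a..t, DP s)
    (hX : ∀ t ∈ [[a, b]], X t = X a + ∫ s in a..t, DX s) :
    ∫ t in a..b, (DP t ⬝ᵥ X t + P t ⬝ᵥ DX t) = P b ⬝ᵥ X b - P a ⬝ᵥ X a := by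
  have hPi := eval_eq_add_integral_eval hDP hP
  have hXi := eval_eq_add_integral_eval hDX hX
  simp only [dotProduct, ← Finset.sum_add_distrib, ← Finset.sum_sub_distrib]
  have hPc i := continuousOn_of_forall_eq_add_integral (hDP.eval i) (hPi i)
  have hXc i := continuousOn_of_forall_eq_add_integral (hDX.eval i) (hXi i)
  rw [intervalIntegral.integral_finsetSum fun i _ =>
    ((hDP.eval i).mul_continuousOn (hXc i)).add ((hDX.eval i).continuousOn_mul (hPc i))]
  exact Finset.sum_congr rfl fun i _ =>
    integral_deriv_mul_eq_sub_of_eq_add_integral (hDP.eval i) (hDX.eval i) (hPi i) (hXi i)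

theorem Matrix.mulVec_mulVec_eq_of_mem_range {M : Matrix κ ι ℝ} {N : Matrix ι κ ℝ}
    (hMN : M * N * M = M) {v : κ → ℝ} (hv : v ∈ LinearMap.range M.mulVecLin) :
    M *ᵥ (N *ᵥ v) = v := by
  obtain ⟨z, rfl⟩ := hv
  simp only [mulVecLin_apply, mulVec_mulVec, ← Matrix.mul_assoc, hMN]

/-- The derivative of `M z` lies in the range of `M`, on which `M N` is the identity. -/
theorem ae_mulVec_mulVec_eq_of_eq_add_integral {M : Matrix κ ι ℝ} {N : Matrix ι κ ℝ}
    (hMN : M * N * M = M) {z : ℝ → ι → ℝ} {φ : ℝ → κ → ℝ}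
    (hφ : IntervalIntegrable φ volume a b)
    (h : ∀ t ∈ [[a, b]], M *ᵥ z t = M *ᵥ z a + ∫ s in a..t, φ s) :
    ∀ᵐ t, t ∈ Ι a b → M *ᵥ (N *ᵥ φ t) = φ t := by
  have hrange := hφ.ae_mem_of_forall_integral_mem
    (LinearMap.range M.mulVecLin).closed_of_finiteDimensional fun t ht =>
      ⟨z t - z a, by simp [mulVec_sub, h t ht]⟩
  filter_upwards [hrange] with t ht hmem using Matrix.mulVec_mulVec_eq_of_mem_range hMN (ht hmem)

end FiniteDimensional

theorem Matrix.transpose_mulVec_dotProduct {ι κ : Type*} [Fintype ι] [Fintype κ]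
    (M : Matrix κ ι ℝ) (v : κ → ℝ) (z : ι → ℝ) : Mᵀ *ᵥ v ⬝ᵥ z = v ⬝ᵥ M *ᵥ z := by
  rw [mulVec_transpose, dotProduct_mulVec]

theorem dotProduct_dual_integrand_eq {ι κ ρ : Type*} [Fintype ι] [Fintype κ] [Fintype ρ]
    {F A : Matrix κ ι ℝ} {H : Matrix ρ ι ℝ} {Fp : Matrix ι κ ℝ}
    {x D : ι → ℝ} {f w : κ → ℝ} {y η U : ρ → ℝ}
    (hg : F *ᵥ (Fp *ᵥ (A *ᵥ x + f)) = A *ᵥ x + f) (hD : Fᵀ *ᵥ (Fpᵀ *ᵥ D) = D)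
    (hy : y = H *ᵥ x + η) :
    w ⬝ᵥ f - U ⬝ᵥ η + (D + Aᵀ *ᵥ w - Hᵀ *ᵥ U) ⬝ᵥ x + y ⬝ᵥ U
      = D ⬝ᵥ Fp *ᵥ (F *ᵥ x) + Fᵀ *ᵥ w ⬝ᵥ Fp *ᵥ (A *ᵥ x + f) := by
  have hw : Fᵀ *ᵥ w ⬝ᵥ Fp *ᵥ (A *ᵥ x + f) = w ⬝ᵥ (A *ᵥ x + f) := by
    rw [transpose_mulVec_dotProduct, hg]
  have hDx : D ⬝ᵥ Fp *ᵥ (F *ᵥ x) = D ⬝ᵥ x := by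
    rw [← transpose_mulVec_dotProduct, ← transpose_mulVec_dotProduct, hD]
  rw [hw, hDx, hy]
  simp only [add_dotProduct, sub_dotProduct, dotProduct_add, transpose_mulVec_dotProduct,
    dotProduct_comm (H *ᵥ x) U, dotProduct_comm η U]
  ring

theorem duality_identity_general {m n p : ℕ}
    (F A : Matrix (Fin m) (Fin n) ℝ) (H : Matrix (Fin p) (Fin n) ℝ)
    (Fp : Matrix (Fin n) (Fin m) ℝ) (hFp : IsMoorePenrose F Fp)
    (t₁ : ℝ) (ht₁ : 0 < t₁) (ℓ : Fin m → ℝ)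
    (x : ℝ → Fin n → ℝ) (f : ℝ → Fin m → ℝ) (y η : ℝ → Fin p → ℝ)
    (w : ℝ → Fin m → ℝ) (U : ℝ → Fin p → ℝ)
    (Dw b : ℝ → Fin n → ℝ)
    -- (x,f,y,η) is a solution of the DAE d(Fx)/dt = Ax + f, y = Hx + η on [0,t₁]:
    (hxint : IntervalIntegrable (fun s => A.mulVec (x s) + f s) volume 0 t₁)
    (hx : ∀ t ∈ Set.Icc (0:ℝ) t₁,
      F.mulVec (x t) = F.mulVec (x 0) + ∫ s in (0:ℝ)..t, (A.mulVec (x s) + f s))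
    (hy : ∀ᵐ t ∂(volume.restrict (Set.Ioc (0:ℝ) t₁)), y t = H.mulVec (x t) + η t)
    (hwt₁ : Fᵀ.mulVec (w t₁) = Fᵀ.mulVec ℓ)
    -- Dw is the a.e. derivative of Fᵀw:
    (hDwint : IntervalIntegrable Dw volume 0 t₁)
    (hDw : ∀ t ∈ Set.Icc (0:ℝ) t₁,
      Fᵀ.mulVec (w t) = Fᵀ.mulVec (w 0) + ∫ s in (0:ℝ)..t, Dw s)
    (hb : ∀ t, b t = Dw t + Aᵀ.mulVec (w t) - Hᵀ.mulVec (U t))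
    -- integrability of the scalar integrands:
    (hiyU : IntervalIntegrable (fun t => y t ⬝ᵥ U t) volume 0 t₁)
    (hirhs : IntervalIntegrable (fun t => w t ⬝ᵥ f t - U t ⬝ᵥ η t + b t ⬝ᵥ x t) volume 0 t₁) :
    ℓ ⬝ᵥ F.mulVec (x t₁) - (∫ t in (0:ℝ)..t₁, y t ⬝ᵥ U t)
      = F.mulVec (x 0) ⬝ᵥ Fpᵀ.mulVec (Fᵀ.mulVec (w 0))
        + ∫ t in (0:ℝ)..t₁, (w t ⬝ᵥ f t - U t ⬝ᵥ η t + b t ⬝ᵥ x t) := by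
  rw [← uIcc_of_le ht₁.le] at hx hDw
  rw [← uIoc_of_le ht₁.le, ae_restrict_iff' measurableSet_uIoc] at hy
  have hFpT : Fᵀ * Fpᵀ * Fᵀ = Fᵀ := by
    simpa only [transpose_mul, Matrix.mul_assoc] using congrArg transpose hFp.1
  have hX : ∀ t ∈ [[0, t₁]], Fp *ᵥ (F *ᵥ x t)
      = Fp *ᵥ (F *ᵥ x 0) + ∫ s in (0:ℝ)..t, Fp *ᵥ (A *ᵥ x s + f s) := fun t ht => by
    rw [hx t ht, mulVec_add, mulVec_intervalIntegral Fp (hxint.mono_set_of_mem_uIcc ht)]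
  have hparts := integral_deriv_dotProduct_eq_sub_of_eq_add_integral hDwint (hxint.mulVec Fp)
    hDw hX
  have hg_range := ae_mulVec_mulVec_eq_of_eq_add_integral hFp.1 hxint hx
  have hDw_range := ae_mulVec_mulVec_eq_of_eq_add_integral hFpT hDwint hDw
  have hcongr : ∫ t in (0:ℝ)..t₁, (w t ⬝ᵥ f t - U t ⬝ᵥ η t + b t ⬝ᵥ x t + y t ⬝ᵥ U t)
      = ∫ t in (0:ℝ)..t₁, (Dw t ⬝ᵥ Fp *ᵥ (F *ᵥ x t) + Fᵀ *ᵥ w t ⬝ᵥ Fp *ᵥ (A *ᵥ x t + f t)) := by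
    refine intervalIntegral.integral_congr_ae ?_
    filter_upwards [hg_range, hDw_range, hy] with t hg hD hyt ht
    rw [hb t]
    exact dotProduct_dual_integrand_eq (hg ht) (hD ht) (hyt ht)
  have hend : Fᵀ *ᵥ w t₁ ⬝ᵥ Fp *ᵥ (F *ᵥ x t₁) = ℓ ⬝ᵥ F *ᵥ x t₁ := by
    rw [hwt₁, transpose_mulVec_dotProduct, mulVec_mulVec, mulVec_mulVec, hFp.1]
  have hstart : Fᵀ *ᵥ w 0 ⬝ᵥ Fp *ᵥ (F *ᵥ x 0) = F *ᵥ x 0 ⬝ᵥ Fpᵀ *ᵥ (Fᵀ *ᵥ w 0) :=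
    (transpose_mulVec_dotProduct Fp _ _).symm.trans (dotProduct_comm _ _)
  rw [intervalIntegral.integral_add hirhs hiyU, hparts, hend, hstart] at hcongr
  linarith

/-- Integration-by-parts identity relating a solution `(x,f,y,η)` of the primal DAE
`d(Fx)/dt = Ax + f, y = Hx + η` on `[0,t₁]` and a solution `(q,u)` of the dual DAE
`d(Fᵀq)/dt = Aᵀq − Hᵀu`, with `w(s) = q(t₁−s)`, `U(s) = u(t₁−s)`, `Fᵀw(t₁) = Fᵀℓ` and
`b = d(Fᵀw)/dt + Aᵀw − HᵀU`:
`ℓᵀFx(t₁) − ∫₀^{t₁} yᵀU = (Fx(0))ᵀ(F⁺)ᵀFᵀw(0) + ∫₀^{t₁} (wᵀf − Uᵀη + bᵀx)`. -/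
theorem duality_identity {m n p : ℕ}
    (F A : Matrix (Fin m) (Fin n) ℝ) (H : Matrix (Fin p) (Fin n) ℝ)
    (Fp : Matrix (Fin n) (Fin m) ℝ) (hFp : IsMoorePenrose F Fp)
    (t₁ : ℝ) (ht₁ : 0 < t₁) (ℓ : Fin m → ℝ)
    (x : ℝ → Fin n → ℝ) (f : ℝ → Fin m → ℝ) (y η : ℝ → Fin p → ℝ)
    (q w : ℝ → Fin m → ℝ) (u U : ℝ → Fin p → ℝ)
    (Dw b : ℝ → Fin n → ℝ)
    -- (x,f,y,η) is a solution of the DAE d(Fx)/dt = Ax + f, y = Hx + η on [0,t₁]: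
    (hxint : IntervalIntegrable (fun s => A.mulVec (x s) + f s) volume 0 t₁)
    (hx : ∀ t ∈ Set.Icc (0:ℝ) t₁,
      F.mulVec (x t) = F.mulVec (x 0) + ∫ s in (0:ℝ)..t, (A.mulVec (x s) + f s))
    (hy : ∀ᵐ t ∂(volume.restrict (Set.Ioc (0:ℝ) t₁)), y t = H.mulVec (x t) + η t)
    -- (q,u) is a solution of the dual DAE d(Fᵀq)/dt = Aᵀq − Hᵀu on [0,t₁]:
    (hqint : IntervalIntegrable (fun s => Aᵀ.mulVec (q s) - Hᵀ.mulVec (u s)) volume 0 t₁)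
    (hq : ∀ t ∈ Set.Icc (0:ℝ) t₁,
      Fᵀ.mulVec (q t) = Fᵀ.mulVec (q 0) + ∫ s in (0:ℝ)..t, (Aᵀ.mulVec (q s) - Hᵀ.mulVec (u s)))
    -- w and U are the time reversals of q and u:
    (hw : ∀ s, w s = q (t₁ - s)) (hU : ∀ s, U s = u (t₁ - s))
    (hwt₁ : Fᵀ.mulVec (w t₁) = Fᵀ.mulVec ℓ)
    -- Dw is the a.e. derivative of Fᵀw:
    (hDwint : IntervalIntegrable Dw volume 0 t₁)
    (hDw : ∀ t ∈ Set.Icc (0:ℝ) t₁,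
      Fᵀ.mulVec (w t) = Fᵀ.mulVec (w 0) + ∫ s in (0:ℝ)..t, Dw s)
    (hb : ∀ t, b t = Dw t + Aᵀ.mulVec (w t) - Hᵀ.mulVec (U t))
    -- integrability of the scalar integrands:
    (hiyU : IntervalIntegrable (fun t => y t ⬝ᵥ U t) volume 0 t₁)
    (hirhs : IntervalIntegrable (fun t => w t ⬝ᵥ f t - U t ⬝ᵥ η t + b t ⬝ᵥ x t) volume 0 t₁) :
    ℓ ⬝ᵥ F.mulVec (x t₁) - (∫ t in (0:ℝ)..t₁, y t ⬝ᵥ U t)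
      = F.mulVec (x 0) ⬝ᵥ Fpᵀ.mulVec (Fᵀ.mulVec (w 0))
        + ∫ t in (0:ℝ)..t₁, (w t ⬝ᵥ f t - U t ⬝ᵥ η t + b t ⬝ᵥ x t) :=
  duality_identity_general F A H Fp hFp t₁ ht₁ ℓ x f y η w U Dw b hxint hx hy hwt₁ hDwint hDw hb
    hiyU hirhs
end

section
/- Let F ∈ ℝ^{m×n}, P = I_m − (Fᵀ)⁺Fᵀ, and let Q₀ be symmetric positive definite m×m. For any fixed vector c ∈ ℝᵐ, the minimum over d̃ ∈ ℝᵐ of ‖Q₀^{−1/2}((F⁺)ᵀFᵀc − P d̃)‖² is attained at d̂ = (PQ₀^{−1}P)⁺PQ₀^{−1}(F⁺)ᵀFᵀc, and the minimum value equals cᵀ Q̄₀ c, where Q̄₀ = F((Fᵀ)⁺ − M)ᵀ Q₀^{−1} ((Fᵀ)⁺ − M)Fᵀ with M = P(PQ₀^{−1}P)⁺PQ₀^{−1}(Fᵀ)⁺. -/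
/-!
Write `A = Q₀⁻¹`, `S = PᵀAP` and let `N` be any generalized inverse of `S` (`SNS = S`).
Positive definiteness of `A` upgrades `SNS = S` to `SNPᵀ = Pᵀ`, so the residual
`u = a - P N Pᵀ A a` satisfies `Pᵀ A u = 0`: it is `A`-orthogonal to the range of `P`.
By Pythagoras, `a - P d = u + P (d̂ - d)` has `A`-norm at least that of `u`, and expanding
`u = (Fpᵀ - M) Fᵀ c` gives the value `cᵀ Q̄₀ c`.
-/

open Matrix

namespace Matrix

variable {ι κ : Type*} [Fintype ι] [Fintype κ]

lemma dotProduct_mulVec_transpose_mul_mul (A : Matrix ι ι ℝ) (B : Matrix ι κ ℝ) (v : κ → ℝ) :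
    v ⬝ᵥ (Bᵀ * A * B) *ᵥ v = (B *ᵥ v) ⬝ᵥ A *ᵥ (B *ᵥ v) := by
  rw [← mulVec_mulVec, ← mulVec_mulVec, dotProduct_transpose_mulVec, dotProduct_comm]

lemma PosDef.eq_zero_of_mul_mul_transpose_eq_zero {A : Matrix ι ι ℝ} (hA : A.PosDef)
    {R : Matrix κ ι ℝ} (h : R * A * Rᵀ = 0) : R = 0 := by
  rw [← transpose_eq_zero]
  refine ext_iff_mulVec.mpr fun x => ?_
  rw [zero_mulVec]
  by_contra hx
  have hpos := hA.dotProduct_mulVec_pos hx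
  rw [star_trivial, ← dotProduct_mulVec_transpose_mul_mul, transpose_transpose, h] at hpos
  simp at hpos

lemma PosDef.gram_mul_mul_transpose_eq_transpose {A : Matrix ι ι ℝ} (hA : A.PosDef)
    (P : Matrix ι κ ℝ) {N : Matrix κ κ ℝ}
    (hN : Pᵀ * A * P * N * (Pᵀ * A * P) = Pᵀ * A * P) :
    Pᵀ * A * P * N * Pᵀ = Pᵀ := by
  set S := Pᵀ * A * P
  have hRAP : (S * N * Pᵀ - Pᵀ) * A * P = 0 := by
    have hSNS : S * N * Pᵀ * A * P = S * N * S := by simp only [S, Matrix.mul_assoc]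
    rw [Matrix.sub_mul, Matrix.sub_mul, hSNS, hN, sub_self]
  have hRARt : (S * N * Pᵀ - Pᵀ) * A * (S * N * Pᵀ - Pᵀ)ᵀ = 0 := by
    rw [transpose_sub, transpose_mul, transpose_transpose, Matrix.mul_sub,
      ← Matrix.mul_assoc _ P, hRAP]
    simp
  exact sub_eq_zero.mp (hA.eq_zero_of_mul_mul_transpose_eq_zero hRARt)

lemma PosDef.transpose_mul_mulVec_sub_mulVec_eq_zero {A : Matrix ι ι ℝ} (hA : A.PosDef)
    (P : Matrix ι κ ℝ) {N : Matrix κ κ ℝ}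
    (hN : Pᵀ * A * P * N * (Pᵀ * A * P) = Pᵀ * A * P) (a : ι → ℝ) :
    (Pᵀ * A) *ᵥ (a - P *ᵥ (N * Pᵀ * A) *ᵥ a) = 0 := by
  have hP := hA.gram_mul_mul_transpose_eq_transpose P hN
  rw [mulVec_sub, mulVec_mulVec, mulVec_mulVec, sub_eq_zero]
  conv_lhs => rw [← hP]
  simp only [Matrix.mul_assoc]

lemma PosSemidef.dotProduct_mulVec_le_add_mulVec {A : Matrix ι ι ℝ} (hA : A.PosSemidef)
    {P : Matrix ι κ ℝ} {u : ι → ℝ} (hu : (Pᵀ * A) *ᵥ u = 0) (v : κ → ℝ) :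
    u ⬝ᵥ A *ᵥ u ≤ (u + P *ᵥ v) ⬝ᵥ A *ᵥ (u + P *ᵥ v) := by
  set w := P *ᵥ v
  have hAt : Aᵀ = A := by simpa using hA.1.eq
  have hwu : w ⬝ᵥ A *ᵥ u = 0 := by
    rw [dotProduct_comm, ← dotProduct_transpose_mulVec, mulVec_mulVec, hu, dotProduct_zero]
  have huw : u ⬝ᵥ A *ᵥ w = 0 := by
    rw [← hAt, dotProduct_transpose_mulVec, hwu]
  have hw : 0 ≤ w ⬝ᵥ A *ᵥ w := by simpa using hA.dotProduct_mulVec_nonneg w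
  simp only [mulVec_add, dotProduct_add, add_dotProduct, hwu, huw]
  linarith

end Matrix

/-- For `P = I − (Fᵀ)⁺Fᵀ` and `Q₀` symmetric positive definite, the minimum over `d̃` of
`‖Q₀^{−1/2}((F⁺)ᵀFᵀc − P d̃)‖²` (written as the quadratic form with weight `Q₀⁻¹`) is
attained at `d̂ = (PQ₀⁻¹P)⁺PQ₀⁻¹(F⁺)ᵀFᵀc`, with minimum value `cᵀ Q̄₀ c`, where
`Q̄₀ = F((Fᵀ)⁺ − M)ᵀ Q₀⁻¹ ((Fᵀ)⁺ − M)Fᵀ` and `M = P(PQ₀⁻¹P)⁺PQ₀⁻¹(Fᵀ)⁺`.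
Here `(Fᵀ)⁺ = (F⁺)ᵀ = Fpᵀ`, and `N` denotes the pseudoinverse `(PQ₀⁻¹P)⁺`. -/
theorem min_quadratic_residual {m n : ℕ}
    (F : Matrix (Fin m) (Fin n) ℝ) (Fp : Matrix (Fin n) (Fin m) ℝ)
    (hFp : IsMoorePenrose F Fp)
    (Q₀ : Matrix (Fin m) (Fin m) ℝ) (hQ₀ : Q₀.PosDef)
    (N : Matrix (Fin m) (Fin m) ℝ)
    (hN : IsMoorePenrose
      ((1 - Fpᵀ * Fᵀ) * Q₀⁻¹ * (1 - Fpᵀ * Fᵀ)) N)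
    (c : Fin m → ℝ) :
    let P : Matrix (Fin m) (Fin m) ℝ := 1 - Fpᵀ * Fᵀ
    let a : Fin m → ℝ := (Fpᵀ * Fᵀ).mulVec c
    let dhat : Fin m → ℝ := (N * P * Q₀⁻¹).mulVec a
    let M : Matrix (Fin m) (Fin n) ℝ := P * N * P * Q₀⁻¹ * Fpᵀ
    let Qbar : Matrix (Fin m) (Fin m) ℝ := F * (Fpᵀ - M)ᵀ * Q₀⁻¹ * (Fpᵀ - M) * Fᵀ
    (∀ d : Fin m → ℝ,
        (a - P.mulVec dhat) ⬝ᵥ Q₀⁻¹.mulVec (a - P.mulVec dhat)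
          ≤ (a - P.mulVec d) ⬝ᵥ Q₀⁻¹.mulVec (a - P.mulVec d)) ∧
    (a - P.mulVec dhat) ⬝ᵥ Q₀⁻¹.mulVec (a - P.mulVec dhat) = c ⬝ᵥ Qbar.mulVec c := by
  intro P a dhat M Qbar
  have hP : Pᵀ = P := by
    simp only [P, transpose_sub, transpose_one, transpose_mul, transpose_transpose]
    rw [← transpose_mul, hFp.2.2.1]
  have hresidual : (Pᵀ * Q₀⁻¹) *ᵥ (a - P *ᵥ dhat) = 0 := by
    have hN' : Pᵀ * Q₀⁻¹ * P * N * (Pᵀ * Q₀⁻¹ * P) = Pᵀ * Q₀⁻¹ * P := by rw [hP]; exact hN.1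
    simpa only [dhat, hP] using hQ₀.inv.transpose_mul_mulVec_sub_mulVec_eq_zero P hN' a
  refine ⟨fun d => ?_, ?_⟩
  · have hd : a - P *ᵥ d = (a - P *ᵥ dhat) + P *ᵥ (dhat - d) := by rw [mulVec_sub]; abel
    rw [hd]
    exact hQ₀.inv.posSemidef.dotProduct_mulVec_le_add_mulVec hresidual _
  · have hQbar : Qbar = ((Fpᵀ - M) * Fᵀ)ᵀ * Q₀⁻¹ * ((Fpᵀ - M) * Fᵀ) := by
      simp only [Qbar, transpose_mul, transpose_transpose, Matrix.mul_assoc]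
    have hres : a - P *ᵥ dhat = ((Fpᵀ - M) * Fᵀ) *ᵥ c := by
      simp only [a, dhat, M, Matrix.sub_mul, sub_mulVec, mulVec_mulVec, Matrix.mul_assoc]
    rw [hQbar, dotProduct_mulVec_transpose_mul_mul, hres]
end

section
/- Let F, A ∈ ℝ^{m×n}, H ∈ ℝ^{p×n}. Suppose (x, f, y, η) solves d(Fx)/dt = Ax + f, y = Hx + η on [0,∞), and (q, u) solves the dual DAE d(Fᵀq)/dt = Aᵀq − Hᵀu on [0,∞). Fix t > 0 and define g(s) = xᵀ(s) Fᵀ q(t − s) for s ∈ [0, t]. Then g is absolutely continuous and g'(s) = fᵀ(s)q(t−s) + (y(s) − η(s))ᵀ u(t−s) for almost every s ∈ [0, t]. -/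
/-! The pairing `xᵀ(s) Fᵀ q(t - s)` is not a product of absolutely continuous functions: only `Fx`
and `Fᵀq` are. Their derivatives `Ax + f` and `Aᵀq - Hᵀu` are a.e. limits of difference quotients
of `Fx` and `Fᵀq`, so they lie a.e. in the closed subspaces `range F` and `range Fᵀ`. With a linear
right inverse `L` of `Fᵀ` on its range, `xᵀ Fᵀ q = (Fx)ᵀ L (Fᵀq)`, a pairing of two absolutely
continuous functions, and the product rule gives the derivative
`(Ax + f)ᵀ L Fᵀ q - (Fx)ᵀ L (Aᵀq - Hᵀu) = (Ax + f)ᵀ q - xᵀ (Aᵀq - Hᵀu) = fᵀ q + (Hx)ᵀ u`,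
the middle equality being where the two range memberships enter. -/

open Matrix MeasureTheory Set

theorem continuousOn_uIcc_of_eq_add_primitive {E : Type*} [NormedAddCommGroup E]
    [NormedSpace ℝ E] {P φ : ℝ → E} {a b : ℝ} {c : E} (hφ : IntervalIntegrable φ volume a b)
    (hP : ∀ x ∈ uIcc a b, P x = c + ∫ y in a..x, φ y) : ContinuousOn P (uIcc a b) :=
  (continuousOn_const.add
    (intervalIntegral.continuousOn_primitive_interval' hφ left_mem_uIcc)).congr hP

theorem intervalIntegral_mul_add_mul_eq_sub_of_primitive {P R φ ψ : ℝ → ℝ} {a b c d : ℝ}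
    (hφ : IntervalIntegrable φ volume a b) (hψ : IntervalIntegrable ψ volume a b)
    (hP : ∀ x ∈ uIcc a b, P x = c + ∫ y in a..x, φ y)
    (hR : ∀ x ∈ uIcc a b, R x = d + ∫ y in a..x, ψ y) :
    ∫ x in a..b, (φ x * R x + P x * ψ x) = P b * R b - c * d := by
  set Φ : ℝ → ℝ := fun x => c + ∫ y in a..x, φ y
  set Ψ : ℝ → ℝ := fun x => d + ∫ y in a..x, ψ y
  have hΦ : AbsolutelyContinuousOnInterval Φ a b :=
    contDiffOn_const.absolutelyContinuousOnInterval.fun_add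
      (hφ.absolutelyContinuousOnInterval_intervalIntegral left_mem_uIcc)
  have hΨ : AbsolutelyContinuousOnInterval Ψ a b :=
    contDiffOn_const.absolutelyContinuousOnInterval.fun_add
      (hψ.absolutelyContinuousOnInterval_intervalIntegral left_mem_uIcc)
  calc ∫ x in a..b, (φ x * R x + P x * ψ x)
      = ∫ x in a..b, (deriv Φ x * Ψ x + Φ x * deriv Ψ x) := by
        refine intervalIntegral.integral_congr_ae ?_
        filter_upwards [hφ.ae_hasDerivAt_integral, hψ.ae_hasDerivAt_integral] with x hφx hψx hx
        have hx : x ∈ uIcc a b := uIoc_subset_uIcc hx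
        rw [((hφx hx a left_mem_uIcc).const_add c).deriv,
          ((hψx hx a left_mem_uIcc).const_add d).deriv, hP x hx, hR x hx]
    _ = Φ b * Ψ b - Φ a * Ψ a := hΦ.integral_deriv_mul_eq_sub hΨ
    _ = P b * R b - c * d := by
        simp only [Φ, Ψ, ← hP b right_mem_uIcc, ← hR b right_mem_uIcc,
          intervalIntegral.integral_same, add_zero]

theorem intervalIntegral_dotProduct_add_dotProduct_eq_sub_of_primitive {ι : Type*} [Fintype ι]
    {P R φ ψ : ℝ → ι → ℝ} {a b : ℝ} {c d : ι → ℝ}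
    (hφ : IntervalIntegrable φ volume a b) (hψ : IntervalIntegrable ψ volume a b)
    (hP : ∀ x ∈ uIcc a b, P x = c + ∫ y in a..x, φ y)
    (hR : ∀ x ∈ uIcc a b, R x = d + ∫ y in a..x, ψ y) :
    ∫ x in a..b, (φ x ⬝ᵥ R x + P x ⬝ᵥ ψ x) = P b ⬝ᵥ R b - c ⬝ᵥ d := by
  have coord {Q χ : ℝ → ι → ℝ} {e : ι → ℝ} (hχ : IntervalIntegrable χ volume a b)
      (hQ : ∀ x ∈ uIcc a b, Q x = e + ∫ y in a..x, χ y) (i : ι) :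
      IntervalIntegrable (χ · i) volume a b ∧ ContinuousOn (Q · i) (uIcc a b) ∧
        ∀ x ∈ uIcc a b, Q x i = e i + ∫ y in a..x, χ y i := by
    let π := ContinuousLinearMap.proj (R := ℝ) (φ := fun _ : ι => ℝ) i
    refine ⟨⟨hχ.1.eval i, hχ.2.eval i⟩, (continuous_apply i).comp_continuousOn
      (continuousOn_uIcc_of_eq_add_primitive hχ hQ), fun x hx => ?_⟩
    rw [hQ x hx, Pi.add_apply]
    congr 1
    exact (π.intervalIntegral_comp_comm (hχ.mono_set (uIcc_subset_uIcc_left hx))).symm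
  simp only [dotProduct, ← Finset.sum_add_distrib, ← Finset.sum_sub_distrib]
  rw [intervalIntegral.integral_finsetSum]
  · exact Finset.sum_congr rfl fun i _ =>
      intervalIntegral_mul_add_mul_eq_sub_of_primitive (coord hφ hP i).1 (coord hψ hR i).1
        (coord hφ hP i).2.2 (coord hψ hR i).2.2
  · exact fun i _ => ((coord hφ hP i).1.mul_continuousOn (coord hψ hR i).2.1).add
      ((coord hψ hR i).1.continuousOn_mul (coord hφ hP i).2.1)

theorem ContinuousLinearMap.apply_eq_add_primitive {E G : Type*} [NormedAddCommGroup E]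
    [NormedSpace ℝ E] [CompleteSpace E] [NormedAddCommGroup G] [NormedSpace ℝ G]
    [CompleteSpace G] (L : E →L[ℝ] G) {P φ : ℝ → E} {a b : ℝ} {c : E}
    (hφ : IntervalIntegrable φ volume a b) (hP : ∀ x ∈ uIcc a b, P x = c + ∫ y in a..x, φ y) :
    ∀ x ∈ uIcc a b, L (P x) = L c + ∫ y in a..x, L (φ y) := fun x hx => by
  rw [hP x hx, map_add, L.intervalIntegral_comp_comm (hφ.mono_set (uIcc_subset_uIcc_left hx))]

theorem eq_add_primitive_comp_sub_left {E : Type*} [NormedAddCommGroup E] [NormedSpace ℝ E]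
    {P φ : ℝ → E} {t : ℝ} (hφ : IntervalIntegrable φ volume 0 t)
    (hP : ∀ x ∈ uIcc 0 t, P x = P 0 + ∫ y in 0..x, φ y) :
    ∀ x ∈ uIcc 0 t, P (t - x) = P t + ∫ y in 0..x, -φ (t - y) := fun x hx => by
  have htx : t - x ∈ uIcc 0 t := by rw [mem_uIcc] at hx ⊢; grind
  rw [intervalIntegral.integral_neg, intervalIntegral.integral_comp_sub_left, sub_zero,
    hP _ htx, hP t right_mem_uIcc, ← intervalIntegral.integral_interval_sub_left hφ
      (hφ.mono_set (uIcc_subset_uIcc_left htx))]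
  abel

theorem ContinuousLinearMap.comp_sub_left_eq_add_primitive {E G : Type*} [NormedAddCommGroup E]
    [NormedSpace ℝ E] [CompleteSpace E] [NormedAddCommGroup G] [NormedSpace ℝ G]
    [CompleteSpace G] (L : E →L[ℝ] G) {P φ : ℝ → E} {t : ℝ}
    (hφ : IntervalIntegrable φ volume 0 t) (hP : ∀ x ∈ uIcc 0 t, P x = P 0 + ∫ y in 0..x, φ y) :
    IntervalIntegrable (fun y => -L (φ (t - y))) volume 0 t ∧
      ∀ x ∈ uIcc 0 t, L (P (t - x)) = L (P t) + ∫ y in 0..x, -L (φ (t - y)) := by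
  have hLφ : IntervalIntegrable (fun y => L (φ y)) volume 0 t :=
    ⟨L.integrable_comp hφ.1, L.integrable_comp hφ.2⟩
  refine ⟨?_, eq_add_primitive_comp_sub_left hLφ (L.apply_eq_add_primitive hφ hP)⟩
  have h := (hLφ.comp_sub_left t).symm.neg
  rwa [sub_zero, sub_self] at h

theorem ae_mem_of_forall_intervalIntegral_mem {E : Type*} [NormedAddCommGroup E]
    [NormedSpace ℝ E] [CompleteSpace E] {V : Submodule ℝ E} (hV : IsClosed (V : Set E))
    {h : ℝ → E} {a b : ℝ} (hh : IntervalIntegrable h volume a b)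
    (hmem : ∀ x ∈ uIcc a b, ∫ y in a..x, h y ∈ V) :
    ∀ᵐ x, x ∈ uIcc a b → h x ∈ V := by
  have hne (c : ℝ) : ∀ᵐ x : ℝ, x ≠ c := by simp [ae_iff, measure_singleton]
  filter_upwards [hh.ae_hasDerivAt_integral, hne a, hne b] with x hderiv hxa hxb hx
  have hxI : x ∈ Ioo (min a b) (max a b) := by
    rw [mem_uIcc] at hx
    constructor <;> grind
  have hslopes := range_derivWithin_subset_closure_span_image (fun x => ∫ y in a..x, h y)
    (s := Ioo (min a b) (max a b)) (t := Ioo (min a b) (max a b)) (by simpa using subset_closure)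
    (mem_range_self x)
  rw [derivWithin_of_isOpen isOpen_Ioo hxI, (hderiv hx a left_mem_uIcc).deriv] at hslopes
  refine closure_minimal (Submodule.span_le.mpr ?_) hV hslopes
  rintro - ⟨z, hz, rfl⟩
  exact hmem z (Ioo_subset_Icc_self hz)

theorem Matrix.ae_mem_range_of_eq_add_primitive {m n : Type*} [Fintype m] [Fintype n]
    (M : Matrix m n ℝ) {z : ℝ → n → ℝ} {φ : ℝ → m → ℝ} {a b : ℝ}
    (hφ : IntervalIntegrable φ volume a b)
    (hMz : ∀ x ∈ uIcc a b, M *ᵥ z x = M *ᵥ z a + ∫ y in a..x, φ y) :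
    ∀ᵐ x, x ∈ uIcc a b → φ x ∈ LinearMap.range M.mulVecLin := by
  refine ae_mem_of_forall_intervalIntegral_mem (Submodule.closed_of_finiteDimensional _) hφ
    fun x hx => ⟨z x - z a, ?_⟩
  rw [mulVecLin_apply, mulVec_sub, hMz x hx, add_sub_cancel_left]

theorem LinearMap.exists_rightInvOn_range {K V W : Type*} [DivisionRing K]
    [AddCommGroup V] [Module K V] [AddCommGroup W] [Module K W] (T : V →ₗ[K] W) :
    ∃ L : W →ₗ[K] V, ∀ w ∈ range T, T (L w) = w := by
  obtain ⟨C, hC⟩ := Submodule.exists_isCompl (range T)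
  obtain ⟨S, hS⟩ := T.rangeRestrict.exists_rightInverse_of_surjective T.range_rangeRestrict
  refine ⟨S ∘ₗ (range T).projectionOnto C hC, fun w hw => ?_⟩
  have := congrArg Subtype.val (LinearMap.congr_fun hS ((range T).projectionOnto C hC w))
  simpa [Submodule.projectionOnto_apply_left hC ⟨w, hw⟩] using this

theorem Matrix.mulVec_dotProduct_eq_of_transpose_mulVec_eq {m n R : Type*} [Fintype m]
    [Fintype n] [CommSemiring R] (M : Matrix m n R) (c : n → R) {w w' : m → R}
    (h : Mᵀ *ᵥ w = Mᵀ *ᵥ w') : M *ᵥ c ⬝ᵥ w = M *ᵥ c ⬝ᵥ w' := by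
  rw [dotProduct_comm, ← dotProduct_transpose_mulVec, h, dotProduct_transpose_mulVec,
    dotProduct_comm]

section PrimalDual

variable {m n p : Type*} [Fintype m] [Fintype n] [Fintype p] {F A : Matrix m n ℝ}
  {H : Matrix p n ℝ} {L : (n → ℝ) → m → ℝ}

theorem dotProduct_transpose_mulVec_eq_of_rightInvOn
    (hL : ∀ w ∈ LinearMap.range Fᵀ.mulVecLin, Fᵀ *ᵥ L w = w) (x : n → ℝ) (q : m → ℝ) :
    x ⬝ᵥ Fᵀ *ᵥ q = F *ᵥ x ⬝ᵥ L (Fᵀ *ᵥ q) := by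
  rw [dotProduct_transpose_mulVec, dotProduct_comm]
  exact F.mulVec_dotProduct_eq_of_transpose_mulVec_eq x (hL _ ⟨q, rfl⟩).symm

theorem primal_dual_integrand_eq
    (hL : ∀ w ∈ LinearMap.range Fᵀ.mulVecLin, Fᵀ *ᵥ L w = w)
    {x : n → ℝ} {f q : m → ℝ} {y η u : p → ℝ}
    (hf : A *ᵥ x + f ∈ LinearMap.range F.mulVecLin)
    (hu : Aᵀ *ᵥ q - Hᵀ *ᵥ u ∈ LinearMap.range Fᵀ.mulVecLin) (hy : y = H *ᵥ x + η) :
    (A *ᵥ x + f) ⬝ᵥ L (Fᵀ *ᵥ q) + F *ᵥ x ⬝ᵥ -L (Aᵀ *ᵥ q - Hᵀ *ᵥ u)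
      = f ⬝ᵥ q + (y - η) ⬝ᵥ u := by
  obtain ⟨c, hc⟩ := hf
  have hq : (A *ᵥ x + f) ⬝ᵥ L (Fᵀ *ᵥ q) = (A *ᵥ x + f) ⬝ᵥ q := by
    rw [← hc]
    exact F.mulVec_dotProduct_eq_of_transpose_mulVec_eq c (hL _ ⟨q, rfl⟩)
  have hb : F *ᵥ x ⬝ᵥ L (Aᵀ *ᵥ q - Hᵀ *ᵥ u) = x ⬝ᵥ (Aᵀ *ᵥ q - Hᵀ *ᵥ u) := by
    rw [dotProduct_comm, ← dotProduct_transpose_mulVec, hL _ hu]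
  rw [hq, dotProduct_neg, hb, hy, add_sub_cancel_right, dotProduct_sub,
    dotProduct_transpose_mulVec, dotProduct_transpose_mulVec, add_dotProduct,
    dotProduct_comm q, dotProduct_comm u]
  ring

end PrimalDual

theorem duality_pairing_derivative_general {m n p : ℕ}
    (F A : Matrix (Fin m) (Fin n) ℝ) (H : Matrix (Fin p) (Fin n) ℝ)
    (t : ℝ) (ht : 0 < t)
    (x : ℝ → Fin n → ℝ) (f : ℝ → Fin m → ℝ) (y η : ℝ → Fin p → ℝ)
    (q : ℝ → Fin m → ℝ) (u : ℝ → Fin p → ℝ)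
    -- (x,f,y,η) solves the primal DAE on [0,∞):
    (hxint : ∀ T > (0:ℝ), IntervalIntegrable (fun s => A.mulVec (x s) + f s) volume 0 T)
    (hx : ∀ τ ∈ Set.Ici (0:ℝ),
      F.mulVec (x τ) = F.mulVec (x 0) + ∫ s in (0:ℝ)..τ, (A.mulVec (x s) + f s))
    (hy : ∀ᵐ τ ∂(volume.restrict (Set.Ici (0:ℝ))), y τ = H.mulVec (x τ) + η τ)
    -- (q,u) solves the dual DAE on [0,∞):
    (hqint : ∀ T > (0:ℝ), IntervalIntegrable
      (fun s => Aᵀ.mulVec (q s) - Hᵀ.mulVec (u s)) volume 0 T)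
    (hq : ∀ τ ∈ Set.Ici (0:ℝ),
      Fᵀ.mulVec (q τ) = Fᵀ.mulVec (q 0)
        + ∫ s in (0:ℝ)..τ, (Aᵀ.mulVec (q s) - Hᵀ.mulVec (u s))) :
    ∀ s ∈ Set.Icc (0:ℝ) t,
      x s ⬝ᵥ Fᵀ.mulVec (q (t - s))
        = x 0 ⬝ᵥ Fᵀ.mulVec (q t)
          + ∫ τ in (0:ℝ)..s, (f τ ⬝ᵥ q (t - τ) + (y τ - η τ) ⬝ᵥ u (t - τ)) := by
  intro s hs
  have hnonneg : ∀ τ ∈ uIcc 0 t, 0 ≤ τ := fun τ hτ => (uIcc_of_le ht.le ▸ hτ).1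
  have hst : uIcc 0 s ⊆ uIcc 0 t :=
    uIcc_subset_uIcc_left (by rw [uIcc_of_le ht.le]; exact hs)
  obtain ⟨L₀, hL₀⟩ := Fᵀ.mulVecLin.exists_rightInvOn_range
  let L := LinearMap.toContinuousLinearMap L₀
  have hL : ∀ w ∈ LinearMap.range Fᵀ.mulVecLin, Fᵀ *ᵥ L w = w := hL₀
  have hP : ∀ τ ∈ uIcc 0 t, _ := fun τ hτ => hx τ (hnonneg τ hτ)
  have hQ : ∀ τ ∈ uIcc 0 t, _ := fun τ hτ => hq τ (hnonneg τ hτ)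
  have ha := hxint t ht
  have hb := hqint t ht
  obtain ⟨hψ, hR⟩ := L.comp_sub_left_eq_add_primitive hb hQ
  have hrange_a := F.ae_mem_range_of_eq_add_primitive ha hP
  have hrange_b := (Measure.measurePreserving_sub_left volume t).quasiMeasurePreserving.ae
    (Fᵀ.ae_mem_range_of_eq_add_primitive hb hQ)
  have hintegrand : ∀ᵐ τ, τ ∈ uIoc 0 s →
      (A *ᵥ x τ + f τ) ⬝ᵥ L (Fᵀ *ᵥ q (t - τ))
          + F *ᵥ x τ ⬝ᵥ -L (Aᵀ *ᵥ q (t - τ) - Hᵀ *ᵥ u (t - τ))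
        = f τ ⬝ᵥ q (t - τ) + (y τ - η τ) ⬝ᵥ u (t - τ) := by
    filter_upwards [hrange_a, hrange_b, (ae_restrict_iff' measurableSet_Ici).mp hy]
      with τ haτ hbτ hyτ hτ
    have hτ : τ ∈ uIcc 0 t := hst (uIoc_subset_uIcc hτ)
    exact primal_dual_integrand_eq hL (haτ hτ) (hbτ (by rw [mem_uIcc] at hτ ⊢; grind))
      (hyτ (hnonneg τ hτ))
  rw [dotProduct_transpose_mulVec_eq_of_rightInvOn hL,
    dotProduct_transpose_mulVec_eq_of_rightInvOn hL,
    ← intervalIntegral.integral_congr_ae hintegrand,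
    intervalIntegral_dotProduct_add_dotProduct_eq_sub_of_primitive (ha.mono_set hst)
      (hψ.mono_set hst) (fun τ hτ => hP τ (hst hτ)) (fun τ hτ => hR τ (hst hτ))]
  abel

/-- If `(x,f,y,η)` solves `d(Fx)/dt = Ax + f`, `y = Hx + η` on `[0,∞)` and `(q,u)` solves
the dual DAE `d(Fᵀq)/dt = Aᵀq − Hᵀu` on `[0,∞)`, then for fixed `t > 0` the function
`g(s) = xᵀ(s)Fᵀq(t−s)` is absolutely continuous on `[0,t]` with
`g'(s) = fᵀ(s)q(t−s) + (y(s) − η(s))ᵀu(t−s)` a.e.; equivalently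
`g(s) = g(0) + ∫₀ˢ (fᵀ(τ)q(t−τ) + (y(τ)−η(τ))ᵀu(t−τ)) dτ` for all `s ∈ [0,t]`. -/
theorem duality_pairing_derivative {m n p : ℕ}
    (F A : Matrix (Fin m) (Fin n) ℝ) (H : Matrix (Fin p) (Fin n) ℝ)
    (t : ℝ) (ht : 0 < t)
    (x : ℝ → Fin n → ℝ) (f : ℝ → Fin m → ℝ) (y η : ℝ → Fin p → ℝ)
    (q : ℝ → Fin m → ℝ) (u : ℝ → Fin p → ℝ)
    -- (x,f,y,η) solves the primal DAE on [0,∞):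
    (hxint : ∀ T > (0:ℝ), IntervalIntegrable (fun s => A.mulVec (x s) + f s) volume 0 T)
    (hx : ∀ τ ∈ Set.Ici (0:ℝ),
      F.mulVec (x τ) = F.mulVec (x 0) + ∫ s in (0:ℝ)..τ, (A.mulVec (x s) + f s))
    (hy : ∀ᵐ τ ∂(volume.restrict (Set.Ici (0:ℝ))), y τ = H.mulVec (x τ) + η τ)
    -- (q,u) solves the dual DAE on [0,∞):
    (hqint : ∀ T > (0:ℝ), IntervalIntegrable
      (fun s => Aᵀ.mulVec (q s) - Hᵀ.mulVec (u s)) volume 0 T)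
    (hq : ∀ τ ∈ Set.Ici (0:ℝ),
      Fᵀ.mulVec (q τ) = Fᵀ.mulVec (q 0)
        + ∫ s in (0:ℝ)..τ, (Aᵀ.mulVec (q s) - Hᵀ.mulVec (u s)))
    -- integrability of the derivative expression:
    (hdint : IntervalIntegrable
      (fun τ => f τ ⬝ᵥ q (t - τ) + (y τ - η τ) ⬝ᵥ u (t - τ)) volume 0 t) :
    ∀ s ∈ Set.Icc (0:ℝ) t,
      x s ⬝ᵥ Fᵀ.mulVec (q (t - s))
        = x 0 ⬝ᵥ Fᵀ.mulVec (q t)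
          + ∫ τ in (0:ℝ)..s, (f τ ⬝ᵥ q (t - τ) + (y τ - η τ) ⬝ᵥ u (t - τ)) :=
  duality_pairing_derivative_general F A H t ht x f y η q u hxint hx hy hqint hq
end
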